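/- arXiv:1601.02645 — 2 statements merged into one kernel-verified Lean document; each statement's English description precedes it below -/
import Mathlib

section
/- Let L > 0. Let u : ℝ → ℝ be twice continuously differentiable, g, f : ℝ → ℝ continuous, and suppose that at the fixed time t*: g(x) − c(x) u''(x) = f(x) for all x ∈ [0, L], where the velocity coefficient is c(x) = Σ_{j=1}^{J} β_j υ_j(x) with υ_1, …, υ_J : ℝ → ℝ twice continuously differentiable and β_1, …, β_J ∈ ℝ. Let φ : ℝ → ℝ be twice continuously differentiable with φ(0) = φ(L) = φ'(0) = φ'(L) = 0. Then Σ_{j=1}^{J} β_j ∫₀ᴸ u(x) [υ_j''(x) φ(x) + 2 υ_j'(x) φ'(x) + υ_j(x) φ''(x)] dx = ∫₀ᴸ [g(x) − f(x)] φ(x) dx. (The linear algebraic relation 𝒜Γ = K for the velocity estimation problem IP2 in the wave equation.) -/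
/-! Two integrations by parts move both derivatives of `u` in `∫₀ᴸ u'' (υⱼ φ)` onto `υⱼ φ`;
the boundary terms vanish because `υⱼ φ` and `(υⱼ φ)' = υⱼ' φ + υⱼ φ'` vanish at `0` and `L`,
and Leibniz' rule expands `(υⱼ φ)''`. Summing over `j` with weights `βⱼ` and substituting
`c u'' = g - f` gives the relation. -/

open intervalIntegral

theorem ContDiff.continuous_deriv_deriv_two {𝕜 F : Type*} [NontriviallyNormedField 𝕜]
    [NormedAddCommGroup F] [NormedSpace 𝕜 F] {f : 𝕜 → F} (hf : ContDiff 𝕜 2 f) :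
    Continuous (deriv (deriv f)) :=
  (hf.deriv' (n := 1)).continuous_deriv_one

theorem deriv_deriv_mul_of_contDiff {𝕜 : Type*} [NontriviallyNormedField 𝕜] {f g : 𝕜 → 𝕜}
    (hf : ContDiff 𝕜 2 f) (hg : ContDiff 𝕜 2 g) (x : 𝕜) :
    deriv (deriv fun y => f y * g y) x
      = deriv (deriv f) x * g x + 2 * deriv f x * deriv g x + f x * deriv (deriv g) x := by
  have hf1 := hf.differentiable two_ne_zero
  have hg1 := hg.differentiable two_ne_zero
  have hf2 := hf.differentiable_deriv_two
  have hg2 := hg.differentiable_deriv_two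
  have hderiv : deriv (fun y => f y * g y) = fun y => deriv f y * g y + f y * deriv g y :=
    funext fun y => deriv_fun_mul (hf1 y) (hg1 y)
  rw [hderiv, deriv_fun_add ((hf2 x).fun_mul (hg1 x)) ((hf1 x).fun_mul (hg2 x)),
    deriv_fun_mul (hf2 x) (hg1 x), deriv_fun_mul (hf1 x) (hg2 x)]
  ring

section IntegrationByParts

variable {u ψ : ℝ → ℝ} {a b : ℝ}

theorem integral_mul_deriv_eq_neg_of_eq_zero (hu : ContDiff ℝ 1 u) (hψ : ContDiff ℝ 1 ψ)
    (hψa : ψ a = 0) (hψb : ψ b = 0) :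
    ∫ x in a..b, u x * deriv ψ x = -∫ x in a..b, deriv u x * ψ x := by
  have hparts := integral_mul_deriv_eq_deriv_mul
    (fun x _ => ((hu.differentiable one_ne_zero) x).hasDerivAt)
    (fun x _ => ((hψ.differentiable one_ne_zero) x).hasDerivAt)
    (hu.continuous_deriv_one.intervalIntegrable a b)
    (hψ.continuous_deriv_one.intervalIntegrable a b)
  rw [hparts, hψa, hψb]
  ring

theorem integral_mul_deriv_deriv_eq_of_eq_zero (hu : ContDiff ℝ 2 u) (hψ : ContDiff ℝ 2 ψ)
    (hψa : ψ a = 0) (hψb : ψ b = 0) (hψ'a : deriv ψ a = 0) (hψ'b : deriv ψ b = 0) :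
    ∫ x in a..b, u x * deriv (deriv ψ) x = ∫ x in a..b, deriv (deriv u) x * ψ x := by
  rw [integral_mul_deriv_eq_neg_of_eq_zero (hu.of_le one_le_two) (hψ.deriv' (n := 1)) hψ'a hψ'b,
    integral_mul_deriv_eq_neg_of_eq_zero (hu.deriv' (n := 1)) (hψ.of_le one_le_two) hψa hψb,
    neg_neg]

end IntegrationByParts

theorem wave_IP2_linear_relation_general (L : ℝ) (hL : 0 < L) (J : ℕ)
    (u g f : ℝ → ℝ) (υ : Fin J → ℝ → ℝ) (β : Fin J → ℝ)
    (hu : ContDiff ℝ 2 u)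
    (hυ : ∀ j, ContDiff ℝ 2 (υ j))
    (hPDE : ∀ x ∈ Set.Icc (0:ℝ) L,
      g x - (∑ j, β j * υ j x) * deriv (deriv u) x = f x)
    (φ : ℝ → ℝ) (hφ : ContDiff ℝ 2 φ)
    (hφ0 : φ 0 = 0) (hφL : φ L = 0) (hφ'0 : deriv φ 0 = 0) (hφ'L : deriv φ L = 0) :
    ∑ j, β j * ∫ x in (0:ℝ)..L,
        u x * (deriv (deriv (υ j)) x * φ x + 2 * deriv (υ j) x * deriv φ x
          + υ j x * deriv (deriv φ) x)
      = ∫ x in (0:ℝ)..L, (g x - f x) * φ x := by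
  have hmodulated (j : Fin J) : (∫ x in (0:ℝ)..L,
      u x * (deriv (deriv (υ j)) x * φ x + 2 * deriv (υ j) x * deriv φ x
        + υ j x * deriv (deriv φ) x))
      = ∫ x in (0:ℝ)..L, deriv (deriv u) x * (υ j x * φ x) := by
    simp_rw [← deriv_deriv_mul_of_contDiff (hυ j) hφ]
    have hderiv y : deriv (fun x => υ j x * φ x) y = deriv (υ j) y * φ y + υ j y * deriv φ y :=
      deriv_fun_mul ((hυ j).differentiable two_ne_zero y) (hφ.differentiable two_ne_zero y)
    exact integral_mul_deriv_deriv_eq_of_eq_zero hu ((hυ j).mul hφ)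
      (by simp [hφ0]) (by simp [hφL]) (by simp [hderiv, hφ0, hφ'0]) (by simp [hderiv, hφL, hφ'L])
  have hintegrable (j : Fin J) : IntervalIntegrable
      (fun x => β j * (deriv (deriv u) x * (υ j x * φ x))) MeasureTheory.volume 0 L :=
    (continuous_const.mul (hu.continuous_deriv_deriv_two.mul
      ((hυ j).continuous.mul hφ.continuous))).intervalIntegrable _ _
  simp_rw [hmodulated, ← integral_const_mul]
  rw [← integral_finsetSum fun j _ => hintegrable j]
  refine integral_congr fun x hx => ?_
  rw [Set.uIcc_of_le hL.le] at hx
  rw [← hPDE x hx, sub_sub_cancel, Finset.sum_mul, Finset.sum_mul]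
  exact Finset.sum_congr rfl fun j _ => by ring

/-- The linear algebraic relation `𝒜Γ = K` for the velocity estimation
problem IP2 in the wave equation: if `g - c u'' = f` on `[0, L]` with
`c = Σⱼ βⱼ υⱼ`, and `φ` is a second-order modulating function, then
`Σⱼ βⱼ ∫₀ᴸ u (υⱼ'' φ + 2 υⱼ' φ' + υⱼ φ'') = ∫₀ᴸ (g - f) φ`. -/
theorem wave_IP2_linear_relation (L : ℝ) (hL : 0 < L) (J : ℕ)
    (u g f : ℝ → ℝ) (υ : Fin J → ℝ → ℝ) (β : Fin J → ℝ)
    (hu : ContDiff ℝ 2 u) (hg : Continuous g) (hf : Continuous f)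
    (hυ : ∀ j, ContDiff ℝ 2 (υ j))
    (hPDE : ∀ x ∈ Set.Icc (0:ℝ) L,
      g x - (∑ j, β j * υ j x) * deriv (deriv u) x = f x)
    (φ : ℝ → ℝ) (hφ : ContDiff ℝ 2 φ)
    (hφ0 : φ 0 = 0) (hφL : φ L = 0) (hφ'0 : deriv φ 0 = 0) (hφ'L : deriv φ L = 0) :
    ∑ j, β j * ∫ x in (0:ℝ)..L,
        u x * (deriv (deriv (υ j)) x * φ x + 2 * deriv (υ j) x * deriv φ x
          + υ j x * deriv (deriv φ) x)
      = ∫ x in (0:ℝ)..L, (g x - f x) * φ x :=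
  wave_IP2_linear_relation_general L hL J u g f υ β hu hυ hPDE φ hφ hφ0 hφL hφ'0 hφ'L
end

section
/- Let L > 0. Let u : ℝ → ℝ be twice continuously differentiable and g : ℝ → ℝ continuous, and suppose the wave equation holds at the fixed time t*: g(x) = Σ_{i=1}^{I} γ_i ξ_i(x) + c(x) u''(x) for all x ∈ [0, L], where the source is f(x) = Σ_{i=1}^{I} γ_i ξ_i(x) with continuous basis functions ξ_i and the velocity coefficient is c(x) = Σ_{j=1}^{J} β_j υ_j(x) with twice continuously differentiable basis functions υ_j. Let φ : ℝ → ℝ be twice continuously differentiable with φ(0) = φ(L) = φ'(0) = φ'(L) = 0. Then Σ_{i=1}^{I} γ_i ∫₀ᴸ φ(x) ξ_i(x) dx + Σ_{j=1}^{J} β_j ∫₀ᴸ u(x) [υ_j''(x) φ(x) + 2 υ_j'(x) φ'(x) + υ_j(x) φ''(x)] dx = ∫₀ᴸ g(x) φ(x) dx. (The linear algebraic relation ℬϜ = Q for the joint source–velocity estimation problem IP3 in the wave equation.) -/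
/-!
Multiply the wave equation at time `t*` by `φ` and integrate over `[0, L]`. The source term is
linear in the `γ i`, and the velocity term splits into the integrals of `(υ j * φ) * u''`. Two
integrations by parts move both derivatives from `u` onto `υ j * φ`, with no boundary terms since
`υ j * φ` and its derivative vanish at `0` and `L` together with `φ` and `φ'`; Leibniz's rule
expands `(υ j * φ)''`.
-/

open intervalIntegral

lemma ContDiff.differentiable_deriv_of_two {f : ℝ → ℝ} (hf : ContDiff ℝ 2 f) :
    Differentiable ℝ (deriv f) :=
  (contDiff_succ_iff_deriv.mp (show ContDiff ℝ (1 + 1) f from hf)).2.2.differentiable one_ne_zero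

lemma ContDiff.continuous_deriv_deriv_of_two {f : ℝ → ℝ} (hf : ContDiff ℝ 2 f) :
    Continuous (deriv (deriv f)) :=
  (contDiff_succ_iff_deriv.mp (show ContDiff ℝ (1 + 1) f from hf)).2.2.continuous_deriv le_rfl

lemma deriv_deriv_mul {f g : ℝ → ℝ} (hf : Differentiable ℝ f) (hg : Differentiable ℝ g)
    (hf' : Differentiable ℝ (deriv f)) (hg' : Differentiable ℝ (deriv g)) (x : ℝ) :
    deriv (deriv (fun y => f y * g y)) x
      = deriv (deriv f) x * g x + 2 * deriv f x * deriv g x + f x * deriv (deriv g) x := by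
  have hfg : deriv (fun y => f y * g y) = fun y => deriv f y * g y + f y * deriv g y :=
    funext fun y => deriv_fun_mul (hf y) (hg y)
  rw [hfg, deriv_fun_add ((hf' x).fun_mul (hg x)) ((hf x).fun_mul (hg' x)),
    deriv_fun_mul (hf' x) (hg x), deriv_fun_mul (hf x) (hg' x)]
  ring

lemma deriv_mul_eq_zero_of_eq_zero {f g : ℝ → ℝ} {x : ℝ} (hf : DifferentiableAt ℝ f x)
    (hg : DifferentiableAt ℝ g x) (hgx : g x = 0) (hg'x : deriv g x = 0) :
    deriv (fun y => f y * g y) x = 0 := by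
  simp [deriv_fun_mul hf hg, hgx, hg'x]

lemma integral_mul_deriv_deriv_eq_deriv_deriv_mul {a b : ℝ} {u w : ℝ → ℝ}
    (hu : ContDiff ℝ 2 u) (hw : ContDiff ℝ 2 w)
    (hwa : w a = 0) (hwb : w b = 0) (hw'a : deriv w a = 0) (hw'b : deriv w b = 0) :
    ∫ x in a..b, w x * deriv (deriv u) x = ∫ x in a..b, deriv (deriv w) x * u x := by
  have once : ∫ x in a..b, w x * deriv (deriv u) x = -∫ x in a..b, deriv w x * deriv u x := by
    rw [integral_mul_deriv_eq_deriv_mul (fun x _ => (hw.differentiable two_ne_zero x).hasDerivAt)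
      (fun x _ => (hu.differentiable_deriv_of_two x).hasDerivAt)
      (hw.differentiable_deriv_of_two.continuous.intervalIntegrable _ _)
      (hu.continuous_deriv_deriv_of_two.intervalIntegrable _ _), hwa, hwb]
    ring
  have twice : ∫ x in a..b, deriv w x * deriv u x = -∫ x in a..b, deriv (deriv w) x * u x := by
    rw [integral_mul_deriv_eq_deriv_mul
      (fun x _ => (hw.differentiable_deriv_of_two x).hasDerivAt)
      (fun x _ => (hu.differentiable two_ne_zero x).hasDerivAt)
      (hw.continuous_deriv_deriv_of_two.intervalIntegrable _ _)
      (hu.differentiable_deriv_of_two.continuous.intervalIntegrable _ _), hw'a, hw'b]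
    ring
  rw [once, twice, neg_neg]

lemma integral_sum_const_mul {ι : Type*} (s : Finset ι) {a b : ℝ} (c : ι → ℝ) {f : ι → ℝ → ℝ}
    (hf : ∀ i ∈ s, IntervalIntegrable (f i) MeasureTheory.volume a b) :
    ∫ x in a..b, ∑ i ∈ s, c i * f i x = ∑ i ∈ s, c i * ∫ x in a..b, f i x := by
  rw [integral_finsetSum fun i hi => (hf i hi).const_mul (c i)]
  simp only [integral_const_mul]

lemma integral_mul_mul_deriv_deriv_eq {a b : ℝ} {u v φ : ℝ → ℝ} (hu : ContDiff ℝ 2 u)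
    (hv : ContDiff ℝ 2 v) (hφ : ContDiff ℝ 2 φ)
    (hφa : φ a = 0) (hφb : φ b = 0) (hφ'a : deriv φ a = 0) (hφ'b : deriv φ b = 0) :
    ∫ x in a..b, v x * φ x * deriv (deriv u) x
      = ∫ x in a..b, u x * (deriv (deriv v) x * φ x
          + 2 * deriv v x * deriv φ x + v x * deriv (deriv φ) x) := by
  have hvd := hv.differentiable two_ne_zero
  have hφd := hφ.differentiable two_ne_zero
  rw [integral_mul_deriv_deriv_eq_deriv_deriv_mul (w := fun x => v x * φ x) hu (hv.mul hφ)
    (by simp [hφa]) (by simp [hφb])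
    (deriv_mul_eq_zero_of_eq_zero (hvd a) (hφd a) hφa hφ'a)
    (deriv_mul_eq_zero_of_eq_zero (hvd b) (hφd b) hφb hφ'b)]
  refine integral_congr fun x _ => ?_
  rw [deriv_deriv_mul hvd hφd hv.differentiable_deriv_of_two hφ.differentiable_deriv_of_two]
  ring

theorem wave_IP3_linear_relation_general (L : ℝ) (hL : 0 < L) (I J : ℕ)
    (u g : ℝ → ℝ) (ξ : Fin I → ℝ → ℝ) (γ : Fin I → ℝ)
    (υ : Fin J → ℝ → ℝ) (β : Fin J → ℝ)
    (hu : ContDiff ℝ 2 u)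
    (hξ : ∀ i, Continuous (ξ i)) (hυ : ∀ j, ContDiff ℝ 2 (υ j))
    (hPDE : ∀ x ∈ Set.Icc (0:ℝ) L,
      g x = (∑ i, γ i * ξ i x) + (∑ j, β j * υ j x) * deriv (deriv u) x)
    (φ : ℝ → ℝ) (hφ : ContDiff ℝ 2 φ)
    (hφ0 : φ 0 = 0) (hφL : φ L = 0) (hφ'0 : deriv φ 0 = 0) (hφ'L : deriv φ L = 0) :
    (∑ i, γ i * ∫ x in (0:ℝ)..L, φ x * ξ i x)
      + ∑ j, β j * ∫ x in (0:ℝ)..L,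
          u x * (deriv (deriv (υ j)) x * φ x + 2 * deriv (υ j) x * deriv φ x
            + υ j x * deriv (deriv φ) x)
      = ∫ x in (0:ℝ)..L, g x * φ x := by
  have tested_PDE : ∫ x in (0:ℝ)..L, g x * φ x
      = ∫ x in (0:ℝ)..L, ((∑ i, γ i * (φ x * ξ i x))
          + ∑ j, β j * (υ j x * φ x * deriv (deriv u) x)) := by
    refine integral_congr fun x hx => ?_
    rw [hPDE x (by rwa [Set.uIcc_of_le hL.le] at hx)]
    simp only [add_mul, Finset.sum_mul]
    congr 1 <;> exact Finset.sum_congr rfl fun _ _ => by ring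
  have hu'' := hu.continuous_deriv_deriv_of_two
  have hsrc (i : Fin I) : Continuous fun x => φ x * ξ i x := by fun_prop
  have hvel (j : Fin J) : Continuous fun x => υ j x * φ x * deriv (deriv u) x := by fun_prop
  have hsrc_sum : Continuous fun x => ∑ i, γ i * (φ x * ξ i x) := by fun_prop
  have hvel_sum : Continuous fun x => ∑ j, β j * (υ j x * φ x * deriv (deriv u) x) := by fun_prop
  rw [tested_PDE, integral_add (hsrc_sum.intervalIntegrable _ _) (hvel_sum.intervalIntegrable _ _),
    integral_sum_const_mul _ γ fun i _ => (hsrc i).intervalIntegrable _ _,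
    integral_sum_const_mul _ β fun j _ => (hvel j).intervalIntegrable _ _]
  simp only [integral_mul_mul_deriv_deriv_eq hu (hυ _) hφ hφ0 hφL hφ'0 hφ'L]

/-- The linear algebraic relation `ℬϜ = Q` for the joint source–velocity
estimation problem IP3 in the wave equation. -/
theorem wave_IP3_linear_relation (L : ℝ) (hL : 0 < L) (I J : ℕ)
    (u g : ℝ → ℝ) (ξ : Fin I → ℝ → ℝ) (γ : Fin I → ℝ)
    (υ : Fin J → ℝ → ℝ) (β : Fin J → ℝ)
    (hu : ContDiff ℝ 2 u) (hg : Continuous g)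
    (hξ : ∀ i, Continuous (ξ i)) (hυ : ∀ j, ContDiff ℝ 2 (υ j))
    (hPDE : ∀ x ∈ Set.Icc (0:ℝ) L,
      g x = (∑ i, γ i * ξ i x) + (∑ j, β j * υ j x) * deriv (deriv u) x)
    (φ : ℝ → ℝ) (hφ : ContDiff ℝ 2 φ)
    (hφ0 : φ 0 = 0) (hφL : φ L = 0) (hφ'0 : deriv φ 0 = 0) (hφ'L : deriv φ L = 0) :
    (∑ i, γ i * ∫ x in (0:ℝ)..L, φ x * ξ i x)
      + ∑ j, β j * ∫ x in (0:ℝ)..L,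
          u x * (deriv (deriv (υ j)) x * φ x + 2 * deriv (υ j) x * deriv φ x
            + υ j x * deriv (deriv φ) x)
      = ∫ x in (0:ℝ)..L, g x * φ x :=
  wave_IP3_linear_relation_general L hL I J u g ξ γ υ β hu hξ hυ hPDE φ hφ hφ0 hφL hφ'0 hφ'L
end
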